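/- (Distance lower bound from a gradient bound) Let n ≥ 1, let F be a Minkowski norm on ℝⁿ with dual norm F⁰, let K ⊂ ℝⁿ be a convex set, let λ > 0, and let u : K → ℝ be a C¹ function (continuously differentiable on a neighborhood of K, or differentiable along segments in K) satisfying F(∇u(x))² ≤ λ (1 − u(x)²) for all x ∈ K. If x₁, x₂ ∈ K satisfy u(x₁) = −1 and u(x₂) = 1, then F⁰(x₂ − x₁) ≥ π/√λ. -/

import Mathlib

open Real MeasureTheory
open scoped RealInnerProductSpace

noncomputable section

/-- A Minkowski norm on ℝⁿ: nonnegative, convex, C¹ away from the origin, even,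
positively 1-homogeneous, and positive away from the origin. -/
structure IsMinkowskiNorm {n : ℕ} (F : EuclideanSpace ℝ (Fin n) → ℝ) : Prop where
  nonneg : ∀ ξ, 0 ≤ F ξ
  convexOn : ConvexOn ℝ Set.univ F
  contDiffOn : ContDiffOn ℝ 1 F {(0 : EuclideanSpace ℝ (Fin n))}ᶜ
  even : ∀ ξ, F (-ξ) = F ξ
  homog : ∀ (t : ℝ) (ξ : EuclideanSpace ℝ (Fin n)), F (t • ξ) = |t| * F ξ
  pos : ∀ ξ, ξ ≠ 0 → 0 < F ξ

/-- The dual norm `F⁰(x) = sup_{ξ ≠ 0} ⟨x, ξ⟩ / F(ξ)`. -/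
def dualNorm {n : ℕ} (F : EuclideanSpace ℝ (Fin n) → ℝ)
    (x : EuclideanSpace ℝ (Fin n)) : ℝ :=
  sSup {r : ℝ | ∃ ξ : EuclideanSpace ℝ (Fin n), ξ ≠ 0 ∧ r = ⟪x, ξ⟫ / F ξ}

/-!
Restricted to the segment `t ↦ x₁ + t • (x₂ - x₁)`, the anisotropic Cauchy–Schwarz inequality
turns the gradient bound into `g' ≤ √λ F⁰(x₂ - x₁) √(1 - g²)` for `g = u(x₁ + t • (x₂ - x₁))`.
On a subinterval where `g` runs from `-1` to `1` while staying strictly between them,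
`arcsin ∘ g` has slope at most `√λ F⁰(x₂ - x₁)` and rises by `π`.
-/

open Set

namespace IsMinkowskiNorm

variable {n : ℕ} {F : EuclideanSpace ℝ (Fin n) → ℝ}

lemma map_zero (hF : IsMinkowskiNorm F) : F 0 = 0 := by
  simpa using hF.homog 0 0

/-- By homogeneity it suffices to compare on the unit sphere, where `F` attains a positive
minimum. -/
lemma exists_pos_mul_norm_le (hF : IsMinkowskiNorm F) : ∃ c > 0, ∀ ξ, c * ‖ξ‖ ≤ F ξ := by
  rcases subsingleton_or_nontrivial (EuclideanSpace ℝ (Fin n)) with _ | _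
  · exact ⟨1, one_pos, fun ξ => by simp [Subsingleton.elim ξ 0, hF.map_zero]⟩
  have hsphere : Metric.sphere (0 : EuclideanSpace ℝ (Fin n)) 1 ⊆ {0}ᶜ := fun ξ hξ h => by
    simp_all
  obtain ⟨ξ₀, hξ₀, hmin⟩ := (isCompact_sphere 0 1).exists_isMinOn
    (NormedSpace.sphere_nonempty.2 zero_le_one) (hF.contDiffOn.continuousOn.mono hsphere)
  refine ⟨F ξ₀, hF.pos ξ₀ (hsphere hξ₀), fun ξ => ?_⟩
  rcases eq_or_ne ξ 0 with rfl | hξ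
  · simp [hF.map_zero]
  have hnorm : 0 < ‖ξ‖ := norm_pos_iff.2 hξ
  have hunit : ‖ξ‖⁻¹ • ξ ∈ Metric.sphere (0 : EuclideanSpace ℝ (Fin n)) 1 := by
    simp [norm_smul, hnorm.ne']
  have h : F ξ₀ ≤ F (‖ξ‖⁻¹ • ξ) := hmin hunit
  rw [hF.homog, abs_of_pos (inv_pos.2 hnorm), le_inv_mul_iff₀ hnorm] at h
  linarith

lemma bddAbove_inner_div (hF : IsMinkowskiNorm F) (x : EuclideanSpace ℝ (Fin n)) :
    BddAbove {r : ℝ | ∃ ξ : EuclideanSpace ℝ (Fin n), ξ ≠ 0 ∧ r = ⟪x, ξ⟫ / F ξ} := by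
  obtain ⟨c, hc, hlow⟩ := hF.exists_pos_mul_norm_le
  refine ⟨‖x‖ / c, ?_⟩
  rintro r ⟨ξ, hξ, rfl⟩
  rw [div_le_div_iff₀ (hF.pos ξ hξ) hc]
  calc ⟪x, ξ⟫ * c ≤ ‖x‖ * ‖ξ‖ * c := by gcongr; exact real_inner_le_norm x ξ
    _ = ‖x‖ * (c * ‖ξ‖) := by ring
    _ ≤ ‖x‖ * F ξ := by gcongr; exact hlow ξ

lemma inner_le_dualNorm_mul (hF : IsMinkowskiNorm F) (x ξ : EuclideanSpace ℝ (Fin n)) :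
    ⟪x, ξ⟫ ≤ dualNorm F x * F ξ := by
  rcases eq_or_ne ξ 0 with rfl | hξ
  · simp [hF.map_zero]
  rw [← div_le_iff₀ (hF.pos ξ hξ)]
  exact le_csSup (hF.bddAbove_inner_div x) ⟨ξ, hξ, rfl⟩

lemma dualNorm_pos (hF : IsMinkowskiNorm F) {x : EuclideanSpace ℝ (Fin n)} (hx : x ≠ 0) :
    0 < dualNorm F x := by
  have hxx : 0 < ⟪x, x⟫ / F x :=
    div_pos (real_inner_self_pos.2 hx) (hF.pos x hx)
  exact hxx.trans_le (le_csSup (hF.bddAbove_inner_div x) ⟨x, hx, rfl⟩)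

end IsMinkowskiNorm

theorem hasDerivAt_comp_add_smul_of_differentiableAt {E : Type*} [NormedAddCommGroup E]
    [InnerProductSpace ℝ E] [CompleteSpace E] {u : E → ℝ} {x v : E} {t : ℝ}
    (hu : DifferentiableAt ℝ u (x + t • v)) :
    HasDerivAt (fun s : ℝ => u (x + s • v)) ⟪gradient u (x + t • v), v⟫ t := by
  have hline : HasDerivAt (fun s : ℝ => x + s • v) v t := by
    simpa using ((hasDerivAt_id t).smul_const v).const_add x
  rw [inner_gradient_left]
  exact hu.hasFDerivAt.comp_hasDerivAt t hline

theorem exists_subinterval_mapsTo_Ioo {g : ℝ → ℝ} {a b c d : ℝ} (hab : a ≤ b)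
    (hg : ContinuousOn g (Icc a b)) (hga : g a = c) (hgb : g b = d) (hcd : c < d) :
    ∃ a' b', a ≤ a' ∧ a' < b' ∧ b' ≤ b ∧ g a' = c ∧ g b' = d ∧
      MapsTo g (Ioo a' b') (Ioo c d) := by
  set T := Icc a b ∩ g ⁻¹' {d}
  have hT : sInf T ∈ T :=
    (hg.preimage_isClosed_of_isClosed isClosed_Icc isClosed_singleton).csInf_mem
      ⟨b, right_mem_Icc.2 hab, hgb⟩ (bddBelow_Icc.mono inter_subset_left)
  set b' := sInf T
  have hgb' : ContinuousOn g (Icc a b') := hg.mono (Icc_subset_Icc le_rfl hT.1.2)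
  set A := Icc a b' ∩ g ⁻¹' {c}
  have hA : sSup A ∈ A :=
    (hgb'.preimage_isClosed_of_isClosed isClosed_Icc isClosed_singleton).csSup_mem
      ⟨a, left_mem_Icc.2 hT.1.1, hga⟩ (bddAbove_Icc.mono inter_subset_left)
  set a' := sSup A
  have hab' : a' < b' := hA.1.2.lt_of_ne fun h =>
    hcd.ne ((hA.2 : g a' = c).symm.trans (h ▸ hT.2 : g a' = d))
  refine ⟨a', b', hA.1.1, hab', hT.1.2, hA.2, hT.2, fun t ht => ⟨?_, ?_⟩⟩
  · by_contra! hle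
    obtain ⟨s, hs, hgs⟩ := intermediate_value_Icc ht.2.le
      (hgb'.mono (Icc_subset_Icc (hA.1.1.trans ht.1.le) le_rfl)) ⟨hle, hT.2 ▸ hcd.le⟩
    have : s ≤ a' := le_csSup (bddAbove_Icc.mono inter_subset_left)
      ⟨⟨hA.1.1.trans (ht.1.le.trans hs.1), hs.2⟩, hgs⟩
    linarith [ht.1, hs.1]
  · by_contra! hle
    obtain ⟨s, hs, hgs⟩ := intermediate_value_Icc ht.1.le
      (hgb'.mono (Icc_subset_Icc hA.1.1 ht.2.le)) ⟨hA.2 ▸ hcd.le, hle⟩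
    have : b' ≤ s := csInf_le (bddBelow_Icc.mono inter_subset_left)
      ⟨⟨hA.1.1.trans hs.1, hs.2.trans (ht.2.le.trans hT.1.2)⟩, hgs⟩
    linarith [ht.2, hs.2]

theorem arcsin_sub_arcsin_le_mul_sub {f f' : ℝ → ℝ} {a b M : ℝ} (hab : a ≤ b)
    (hf : ContinuousOn f (Icc a b)) (hf' : ∀ t ∈ Ioo a b, HasDerivAt f (f' t) t)
    (hmaps : MapsTo f (Ioo a b) (Ioo (-1) 1))
    (hbound : ∀ t ∈ Ioo a b, f' t ≤ M * √(1 - f t ^ 2)) :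
    arcsin (f b) - arcsin (f a) ≤ M * (b - a) := by
  have hderiv : ∀ t ∈ Ioo a b,
      HasDerivAt (arcsin ∘ f) (1 / √(1 - f t ^ 2) * f' t) t := fun t ht =>
    (hasDerivAt_arcsin (hmaps ht).1.ne' (hmaps ht).2.ne).comp t (hf' t ht)
  refine (convex_Icc a b).image_sub_le_mul_sub_of_deriv_le
    (continuous_arcsin.comp_continuousOn hf) (fun t ht => ?_) (fun t ht => ?_)
    a (left_mem_Icc.2 hab) b (right_mem_Icc.2 hab) hab <;> rw [interior_Icc] at ht
  · exact (hderiv t ht).differentiableAt.differentiableWithinAt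
  · have hpos : 0 < √(1 - f t ^ 2) := by
      have := hmaps ht
      exact sqrt_pos.2 (by nlinarith [this.1, this.2])
    rw [(hderiv t ht).deriv, one_div_mul_eq_div, div_le_iff₀ hpos]
    exact hbound t ht

theorem pi_le_mul_sub_of_deriv_le_mul_sqrt {g g' : ℝ → ℝ} {a b M : ℝ} (hab : a ≤ b)
    (hM : 0 ≤ M) (hg : ContinuousOn g (Icc a b)) (hg' : ∀ t ∈ Ioo a b, HasDerivAt g (g' t) t)
    (hbound : ∀ t ∈ Ioo a b, g t ∈ Ioo (-1) 1 → g' t ≤ M * √(1 - g t ^ 2))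
    (hga : g a = -1) (hgb : g b = 1) :
    π ≤ M * (b - a) := by
  obtain ⟨a', b', haa', hab', hb'b, hga', hgb', hmaps⟩ :=
    exists_subinterval_mapsTo_Ioo hab hg hga hgb (by norm_num)
  have hsub : Ioo a' b' ⊆ Ioo a b := Ioo_subset_Ioo haa' hb'b
  have key := arcsin_sub_arcsin_le_mul_sub hab'.le (hg.mono (Icc_subset_Icc haa' hb'b))
    (fun t ht => hg' t (hsub ht)) hmaps (fun t ht => hbound t (hsub ht) (hmaps ht))
  rw [hga', hgb', arcsin_one, arcsin_neg_one] at key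
  calc π = π / 2 - -(π / 2) := by ring
    _ ≤ M * (b' - a') := key
    _ ≤ M * (b - a) := by gcongr

theorem distance_lower_bound_of_gradient_bound_general {n : ℕ}
    (F : EuclideanSpace ℝ (Fin n) → ℝ) (hF : IsMinkowskiNorm F)
    (K : Set (EuclideanSpace ℝ (Fin n))) (hK : Convex ℝ K)
    (lam : ℝ) (hlam : 0 < lam)
    (u : EuclideanSpace ℝ (Fin n) → ℝ)
    (V : Set (EuclideanSpace ℝ (Fin n))) (hV : IsOpen V) (hKV : K ⊆ V)
    (hu : ContDiffOn ℝ 1 u V)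
    (hgrad : ∀ x ∈ K, F (gradient u x) ^ 2 ≤ lam * (1 - u x ^ 2))
    (x₁ x₂ : EuclideanSpace ℝ (Fin n)) (hx₁ : x₁ ∈ K) (hx₂ : x₂ ∈ K)
    (hu₁ : u x₁ = -1) (hu₂ : u x₂ = 1) :
    π / Real.sqrt lam ≤ dualNorm F (x₂ - x₁) := by
  set v := x₂ - x₁
  set D := dualNorm F v
  have hv : v ≠ 0 := sub_ne_zero.2 fun h => by rw [h, hu₁] at hu₂; norm_num at hu₂
  have hD : 0 < D := hF.dualNorm_pos hv
  have hseg : ∀ t ∈ Icc (0 : ℝ) 1, x₁ + t • v ∈ K := fun t ht => hK.add_smul_sub_mem hx₁ hx₂ ht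
  have hderiv : ∀ t ∈ Icc (0 : ℝ) 1,
      HasDerivAt (fun s : ℝ => u (x₁ + s • v)) ⟪gradient u (x₁ + t • v), v⟫ t := fun t ht =>
    hasDerivAt_comp_add_smul_of_differentiableAt
      ((hu.differentiableOn one_ne_zero).differentiableAt (hV.mem_nhds (hKV (hseg t ht))))
  have hbound : ∀ t ∈ Icc (0 : ℝ) 1, ⟪gradient u (x₁ + t • v), v⟫ ≤
      √lam * D * √(1 - u (x₁ + t • v) ^ 2) := fun t ht => by
    set ξ := gradient u (x₁ + t • v)
    calc ⟪ξ, v⟫ = ⟪v, ξ⟫ := real_inner_comm _ _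
      _ ≤ D * F ξ := hF.inner_le_dualNorm_mul v ξ
      _ ≤ D * √(lam * (1 - u (x₁ + t • v) ^ 2)) := by
        gcongr; exact le_sqrt_of_sq_le (hgrad _ (hseg t ht))
      _ = √lam * D * √(1 - u (x₁ + t • v) ^ 2) := by rw [sqrt_mul hlam.le]; ring
  have hcont : ContinuousOn (fun s : ℝ => u (x₁ + s • v)) (Icc 0 1) :=
    hu.continuousOn.comp (by fun_prop) fun t ht => hKV (hseg t ht)
  have hπ := pi_le_mul_sub_of_deriv_le_mul_sqrt zero_le_one (by positivity) hcont
    (fun t ht => hderiv t (Ioo_subset_Icc_self ht))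
    (fun t ht _ => hbound t (Ioo_subset_Icc_self ht)) (by simpa using hu₁)
    (by simpa [v] using hu₂)
  rw [div_le_iff₀ (sqrt_pos.2 hlam)]
  linarith

/-- Distance lower bound from a gradient bound: if `F(∇u)² ≤ λ(1 − u²)` on a convex
set `K` and `u` attains the values `−1` and `1` at `x₁, x₂ ∈ K`, then
`F⁰(x₂ − x₁) ≥ π/√λ`. -/
theorem distance_lower_bound_of_gradient_bound {n : ℕ} (hn : 1 ≤ n)
    (F : EuclideanSpace ℝ (Fin n) → ℝ) (hF : IsMinkowskiNorm F)
    (K : Set (EuclideanSpace ℝ (Fin n))) (hK : Convex ℝ K)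
    (lam : ℝ) (hlam : 0 < lam)
    (u : EuclideanSpace ℝ (Fin n) → ℝ)
    (V : Set (EuclideanSpace ℝ (Fin n))) (hV : IsOpen V) (hKV : K ⊆ V)
    (hu : ContDiffOn ℝ 1 u V)
    (hgrad : ∀ x ∈ K, F (gradient u x) ^ 2 ≤ lam * (1 - u x ^ 2))
    (x₁ x₂ : EuclideanSpace ℝ (Fin n)) (hx₁ : x₁ ∈ K) (hx₂ : x₂ ∈ K)
    (hu₁ : u x₁ = -1) (hu₂ : u x₂ = 1) :
    π / Real.sqrt lam ≤ dualNorm F (x₂ - x₁) :=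
  distance_lower_bound_of_gradient_bound_general F hF K hK lam hlam u V hV hKV hu hgrad x₁ x₂ hx₁
    hx₂ hu₁ hu₂
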